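/- Let Q be a quantaloid and Φ : D ⇸ E a Q-distributor between Q-categories. Then a separated total Q-category X is isomorphic to MΦ := Fix(Φ↓Φ↑) if and only if there exist a dense Q-functor F : D → X and a codense Q-functor G : E → X such that Φ(A,B) = X(FA,GB) for all A ∈ D₀ and B ∈ E₀. -/

import Mathlib

universe u

/-- A quantaloid: a category whose hom-sets are complete lattices and whose
composition preserves arbitrary joins in each variable. -/
structure Quantaloid : Type (u + 1) where
  Obj : Type u
  Hom : Obj → Obj → Type u
  [lat : ∀ S T : Obj, CompleteLattice (Hom S T)]
  comp : ∀ {S T U : Obj}, Hom T U → Hom S T → Hom S U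
  one : ∀ S : Obj, Hom S S
  comp_assoc : ∀ {S T U V : Obj} (w : Hom U V) (v : Hom T U) (u : Hom S T),
      comp (comp w v) u = comp w (comp v u)
  comp_one : ∀ {S T : Obj} (u : Hom S T), comp u (one S) = u
  one_comp : ∀ {S T : Obj} (u : Hom S T), comp (one T) u = u
  comp_sSup : ∀ {S T U : Obj} (v : Hom T U) (s : Set (Hom S T)),
      comp v (sSup s) = ⨆ u ∈ s, comp v u
  sSup_comp : ∀ {S T U : Obj} (s : Set (Hom T U)) (u : Hom S T),
      comp (sSup s) u = ⨆ v ∈ s, comp v u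

attribute [instance] Quantaloid.lat

namespace Quantaloid

variable (Q : Quantaloid.{u})

/-- The left implication `w ↙ u`, characterized by `v ∘ u ≤ w ↔ v ≤ w ↙ u`. -/
def lda {S T U : Q.Obj} (w : Q.Hom S U) (u : Q.Hom S T) : Q.Hom T U :=
  sSup {v | Q.comp v u ≤ w}

/-- The right implication `v ↘ w`, characterized by `v ∘ u ≤ w ↔ u ≤ v ↘ w`. -/
def rda {S T U : Q.Obj} (v : Q.Hom T U) (w : Q.Hom S U) : Q.Hom S T :=
  sSup {u | Q.comp v u ≤ w}

/-- Transport of a `Q`-arrow along equalities of objects. -/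
def cast {S S' T T' : Q.Obj} (hS : S = S') (hT : T = T') (u : Q.Hom S T) : Q.Hom S' T' :=
  hS ▸ hT ▸ u

variable {Q}

theorem comp_mono_left {S T U : Q.Obj} {v v' : Q.Hom T U} (h : v ≤ v') (u : Q.Hom S T) :
    Q.comp v u ≤ Q.comp v' u := by
  have h1 : sSup ({v, v'} : Set (Q.Hom T U)) = v' := by
    rw [sSup_pair]; exact sup_eq_right.mpr h
  calc Q.comp v u ≤ ⨆ x ∈ ({v, v'} : Set (Q.Hom T U)), Q.comp x u :=
        le_iSup₂ (f := fun x _ => Q.comp x u) v (by simp)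
    _ = Q.comp (sSup ({v, v'} : Set (Q.Hom T U))) u := (Q.sSup_comp _ _).symm
    _ = Q.comp v' u := by rw [h1]

theorem comp_mono_right {S T U : Q.Obj} (v : Q.Hom T U) {u u' : Q.Hom S T} (h : u ≤ u') :
    Q.comp v u ≤ Q.comp v u' := by
  have h1 : sSup ({u, u'} : Set (Q.Hom S T)) = u' := by
    rw [sSup_pair]; exact sup_eq_right.mpr h
  calc Q.comp v u ≤ ⨆ x ∈ ({u, u'} : Set (Q.Hom S T)), Q.comp v x :=
        le_iSup₂ (f := fun x _ => Q.comp v x) u (by simp)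
    _ = Q.comp v (sSup ({u, u'} : Set (Q.Hom S T))) := (Q.comp_sSup _ _).symm
    _ = Q.comp v u' := by rw [h1]

theorem comp_lda_le {S T U : Q.Obj} (w : Q.Hom S U) (u : Q.Hom S T) :
    Q.comp (Q.lda w u) u ≤ w := by
  rw [lda, Q.sSup_comp]
  exact iSup₂_le fun v hv => hv

theorem comp_rda_le {S T U : Q.Obj} (v : Q.Hom T U) (w : Q.Hom S U) :
    Q.comp v (Q.rda v w) ≤ w := by
  rw [rda, Q.comp_sSup]
  exact iSup₂_le fun u hu => hu

theorem le_lda {S T U : Q.Obj} {u : Q.Hom S T} {v : Q.Hom T U} {w : Q.Hom S U} :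
    Q.comp v u ≤ w ↔ v ≤ Q.lda w u :=
  ⟨fun h => le_sSup h, fun h => le_trans (comp_mono_left h u) (comp_lda_le w u)⟩

theorem le_rda {S T U : Q.Obj} {u : Q.Hom S T} {v : Q.Hom T U} {w : Q.Hom S U} :
    Q.comp v u ≤ w ↔ u ≤ Q.rda v w :=
  ⟨fun h => le_sSup h, fun h => le_trans (comp_mono_right v h) (comp_rda_le v w)⟩

theorem cast_cast {S S' S'' T T' T'' : Q.Obj} (h1 : S = S') (h2 : T = T')
    (h3 : S' = S'') (h4 : T' = T'') (u : Q.Hom S T) :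
    Q.cast h3 h4 (Q.cast h1 h2 u) = Q.cast (h1.trans h3) (h2.trans h4) u := by
  subst h1; subst h2; subst h3; subst h4; rfl

theorem cast_mono {S S' T T' : Q.Obj} (hS : S = S') (hT : T = T') {u v : Q.Hom S T}
    (h : u ≤ v) : Q.cast hS hT u ≤ Q.cast hS hT v := by
  subst hS; subst hT; exact h

end Quantaloid
/-! ## Quantaloid-enriched categories -/

/-- A `Q`-category: a class of objects with extents and hom-arrows in `Q`. -/
structure QCat (Q : Quantaloid.{u}) : Type (u + 1) where
  Obj : Type u
  ext : Obj → Q.Obj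
  hom : ∀ X Y : Obj, Q.Hom (ext X) (ext Y)
  one_le : ∀ X, Q.one (ext X) ≤ hom X X
  comp_le : ∀ X Y Z, Q.comp (hom Y Z) (hom X Y) ≤ hom X Z

/-- A `Q`-relation between (the object classes of) two `Q`-categories. -/
abbrev QRel (Q : Quantaloid.{u}) (D E : QCat Q) : Type u :=
  ∀ (X : D.Obj) (Y : E.Obj), Q.Hom (D.ext X) (E.ext Y)

/-- The hom `Q`-relation of a `Q`-category. -/
def QCat.homRel {Q : Quantaloid.{u}} (E : QCat Q) : QRel Q E E := fun X Y => E.hom X Y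

/-- Composition of `Q`-relations. -/
def QRel.comp {Q : Quantaloid.{u}} {C D E : QCat Q} (Ψ : QRel Q D E) (Φ : QRel Q C D) :
    QRel Q C E :=
  fun X Z => ⨆ Y : D.Obj, Q.comp (Ψ Y Z) (Φ X Y)

/-- Left implication of `Q`-relations: `(Ξ ↙ Φ)(Y,Z) = ⋀_X Ξ(X,Z) ↙ Φ(X,Y)`. -/
def QRel.lda {Q : Quantaloid.{u}} {C D E : QCat Q} (Ξ : QRel Q C E) (Φ : QRel Q C D) :
    QRel Q D E :=
  fun Y Z => ⨅ X : C.Obj, Q.lda (Ξ X Z) (Φ X Y)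

/-- Right implication of `Q`-relations: `(Ψ ↘ Ξ)(X,Y) = ⋀_Z Ψ(Y,Z) ↘ Ξ(X,Z)`. -/
def QRel.rda {Q : Quantaloid.{u}} {C D E : QCat Q} (Ψ : QRel Q D E) (Ξ : QRel Q C E) :
    QRel Q C D :=
  fun X Y => ⨅ Z : E.Obj, Q.rda (Ψ Y Z) (Ξ X Z)

/-- A `Q`-relation between `Q`-categories is a `Q`-distributor if `E ∘ Φ ∘ D ≤ Φ`. -/
def IsDist {Q : Quantaloid.{u}} {D E : QCat Q} (Φ : QRel Q D E) : Prop :=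
  QRel.comp E.homRel (QRel.comp Φ D.homRel) ≤ Φ

/-- The one-object `Q`-category on an object `T` of `Q`, with hom `1_T`. -/
def singleQCat (Q : Quantaloid.{u}) (T : Q.Obj) : QCat Q where
  Obj := PUnit
  ext _ := T
  hom _ _ := Q.one T
  one_le _ := le_rfl
  comp_le _ _ _ := le_of_eq (Q.comp_one _)

/-- A sink of extent `T` on a `Q`-category `E`: a `Q`-relation `E₀ ⇸ {T}`. -/
abbrev Sink {Q : Quantaloid.{u}} (E : QCat Q) (T : Q.Obj) : Type u :=
  QRel Q E (singleQCat Q T)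

/-- A source of extent `T` on a `Q`-category `E`: a `Q`-relation `{T} ⇸ E₀`. -/
abbrev Source {Q : Quantaloid.{u}} (E : QCat Q) (T : Q.Obj) : Type u :=
  QRel Q (singleQCat Q T) E

/-- `Y` is the supremum of the sink `σ`: `Y` has extent `T` and `E(Y,−) = E ↙ σ`. -/
structure IsSup {Q : Quantaloid.{u}} (E : QCat Q) {T : Q.Obj} (σ : Sink E T) (Y : E.Obj) :
    Prop where
  ext : E.ext Y = T
  hom : ∀ Z : E.Obj, Q.cast ext rfl (E.hom Y Z) = QRel.lda E.homRel σ PUnit.unit Z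

/-- `Y` is the infimum of the source `τ`: `Y` has extent `T` and `E(−,Y) = τ ↘ E`. -/
structure IsInf {Q : Quantaloid.{u}} (E : QCat Q) {T : Q.Obj} (τ : Source E T) (Y : E.Obj) :
    Prop where
  ext : E.ext Y = T
  hom : ∀ Z : E.Obj, Q.cast rfl ext (E.hom Z Y) = QRel.rda τ E.homRel Z PUnit.unit

/-- A `Q`-category is total if every sink on it has a supremum. -/
def QCat.Total {Q : Quantaloid.{u}} (E : QCat Q) : Prop :=
  ∀ (T : Q.Obj) (σ : Sink E T), ∃ Y : E.Obj, IsSup E σ Y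

/-- A `Q`-functor between `Q`-categories. -/
structure QFun {Q : Quantaloid.{u}} (D E : QCat Q) : Type u where
  obj : D.Obj → E.Obj
  ext : ∀ X, E.ext (obj X) = D.ext X
  hom_le : ∀ X Y, D.hom X Y ≤ Q.cast (ext X) (ext Y) (E.hom (obj X) (obj Y))

/-- The graph `F_♮(X,Y) = E(FX,Y)` of a `Q`-functor. -/
def QFun.graph {Q : Quantaloid.{u}} {D E : QCat Q} (F : QFun D E) : QRel Q D E :=
  fun X Y => Q.cast (F.ext X) rfl (E.hom (F.obj X) Y)

/-- The cograph `F^♮(Y,X) = E(Y,FX)` of a `Q`-functor. -/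
def QFun.cograph {Q : Quantaloid.{u}} {D E : QCat Q} (F : QFun D E) : QRel Q E D :=
  fun Y X => Q.cast rfl (F.ext X) (E.hom Y (F.obj X))

/-- `Y` is the colimit of `F` weighted by the sink `σ`: `E(Y,−) = F_♮ ↙ σ`. -/
structure IsColim {Q : Quantaloid.{u}} {D E : QCat Q} (F : QFun D E) {T : Q.Obj}
    (σ : Sink D T) (Y : E.Obj) : Prop where
  ext : E.ext Y = T
  hom : ∀ Z : E.Obj, Q.cast ext rfl (E.hom Y Z) = QRel.lda F.graph σ PUnit.unit Z

/-- `Y` is the limit of `F` weighted by the source `τ`: `E(−,Y) = τ ↘ F^♮`. -/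
structure IsLim {Q : Quantaloid.{u}} {D E : QCat Q} (F : QFun D E) {T : Q.Obj}
    (τ : Source D T) (Y : E.Obj) : Prop where
  ext : E.ext Y = T
  hom : ∀ Z : E.Obj, Q.cast rfl ext (E.hom Z Y) = QRel.rda τ F.cograph Z PUnit.unit

/-- A `Q`-functor is dense if every object of its codomain is a weighted colimit of it. -/
def QFun.Dense {Q : Quantaloid.{u}} {D E : QCat Q} (F : QFun D E) : Prop :=
  ∀ Y : E.Obj, ∃ (T : Q.Obj) (σ : Sink D T), IsColim F σ Y

/-- A `Q`-functor is codense if every object of its codomain is a weighted limit of it. -/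
def QFun.Codense {Q : Quantaloid.{u}} {D E : QCat Q} (F : QFun D E) : Prop :=
  ∀ Y : E.Obj, ∃ (T : Q.Obj) (τ : Source D T), IsLim F τ Y

/-- The underlying (pre)order of a `Q`-category: `X ≤ Y` iff `|X| = |Y|` and
`1_{|X|} ≤ E(X,Y)`. -/
def QCat.le {Q : Quantaloid.{u}} (E : QCat Q) (X Y : E.Obj) : Prop :=
  ∃ h : E.ext X = E.ext Y, Q.cast rfl h (Q.one (E.ext X)) ≤ E.hom X Y

/-- `X ≅ Y` in the underlying order of a `Q`-category. -/
def QCat.iso {Q : Quantaloid.{u}} (E : QCat Q) (X Y : E.Obj) : Prop :=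
  E.le X Y ∧ E.le Y X

/-- A `Q`-category is separated if isomorphic objects are equal. -/
def QCat.Separated {Q : Quantaloid.{u}} (E : QCat Q) : Prop :=
  ∀ X Y : E.Obj, E.iso X Y → X = Y

/-- The identity `Q`-functor. -/
def QFun.id {Q : Quantaloid.{u}} (E : QCat Q) : QFun E E where
  obj X := X
  ext _ := rfl
  hom_le _ _ := le_rfl

/-- Composition of `Q`-functors. -/
def QFun.comp {Q : Quantaloid.{u}} {C D E : QCat Q} (G : QFun D E) (F : QFun C D) :
    QFun C E where
  obj X := G.obj (F.obj X)
  ext X := (G.ext (F.obj X)).trans (F.ext X)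
  hom_le X Y := by
    refine le_trans (F.hom_le X Y) ?_
    refine le_trans (Quantaloid.cast_mono (F.ext X) (F.ext Y)
      (G.hom_le (F.obj X) (F.obj Y))) ?_
    rw [Quantaloid.cast_cast]

/-- The full `Q`-subcategory of `E` on the objects satisfying `P`. -/
def QCat.full {Q : Quantaloid.{u}} (E : QCat Q) (P : E.Obj → Prop) : QCat Q where
  Obj := {X : E.Obj // P X}
  ext X := E.ext X.1
  hom X Y := E.hom X.1 Y.1
  one_le X := E.one_le X.1
  comp_le X Y Z := E.comp_le X.1 Y.1 Z.1

/-- The inclusion `Q`-functor of a full `Q`-subcategory. -/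
def QCat.incl {Q : Quantaloid.{u}} (E : QCat Q) (P : E.Obj → Prop) :
    QFun (E.full P) E where
  obj X := X.1
  ext _ := rfl
  hom_le _ _ := le_rfl

/-- The full `Q`-subcategory of fixed points of an endo-`Q`-functor. -/
def QCat.fix {Q : Quantaloid.{u}} (E : QCat Q) (F : QFun E E) : QCat Q :=
  E.full (fun X => E.iso (F.obj X) X)

/-- Adjoint `Q`-functors: `L ⊣ R` iff `E(LX,Y) = D(X,RY)`. -/
def QAdj {Q : Quantaloid.{u}} {D E : QCat Q} (L : QFun D E) (R : QFun E D) : Prop :=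
  ∀ (X : D.Obj) (Y : E.Obj), L.graph X Y = Q.cast rfl (R.ext Y) (D.hom X (R.obj Y))

/-- An essentially surjective `Q`-functor. -/
def QFun.EssSurj {Q : Quantaloid.{u}} {D E : QCat Q} (F : QFun D E) : Prop :=
  ∀ Y : E.Obj, ∃ X : D.Obj, E.iso Y (F.obj X)

/-- Equivalence of `Q`-categories. -/
def QEquiv {Q : Quantaloid.{u}} (D E : QCat Q) : Prop :=
  ∃ (F : QFun D E) (G : QFun E D),
    (∀ X, D.iso (G.obj (F.obj X)) X) ∧ (∀ Y, E.iso (F.obj (G.obj Y)) Y)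

/-- Isomorphism of `Q`-categories. -/
def QIso {Q : Quantaloid.{u}} (D E : QCat Q) : Prop :=
  ∃ (F : QFun D E) (G : QFun E D),
    (∀ X, G.obj (F.obj X) = X) ∧ (∀ Y, F.obj (G.obj Y) = Y)

/-- Tensor: `Y = f ⊗ X` iff `E(Y,−) = E(X,−) ↙ f`. -/
structure IsTensor {Q : Quantaloid.{u}} (E : QCat Q) {T : Q.Obj} (X : E.Obj)
    (f : Q.Hom (E.ext X) T) (Y : E.Obj) : Prop where
  ext : E.ext Y = T
  hom : ∀ Z : E.Obj, Q.cast ext rfl (E.hom Y Z) = Q.lda (E.hom X Z) f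

/-- Cotensor: `Y = g ⤳ X` iff `E(−,Y) = g ↘ E(−,X)`. -/
structure IsCotensor {Q : Quantaloid.{u}} (E : QCat Q) {T : Q.Obj} (X : E.Obj)
    (g : Q.Hom T (E.ext X)) (Y : E.Obj) : Prop where
  ext : E.ext Y = T
  hom : ∀ Z : E.Obj, Q.cast rfl ext (E.hom Z Y) = Q.rda g (E.hom Z X)
/-! ## The Isbell adjunction and its fixed points -/

section MCat

variable {Q : Quantaloid.{u}} {D E : QCat Q}

/-- The Isbell upper map of a `Q`-distributor `Φ : D ⇸ E` on (pre)sheaves: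
`Φ↑σ = Φ ↙ σ`. -/
def isbellUp (Φ : QRel Q D E) {T : Q.Obj} (σ : Sink D T) : Source E T :=
  QRel.lda Φ σ

/-- The Isbell lower map of a `Q`-distributor `Φ : D ⇸ E` on (co)presheaves:
`Φ↓τ = τ ↘ Φ`. -/
def isbellDown (Φ : QRel Q D E) {T : Q.Obj} (τ : Source E T) : Sink D T :=
  QRel.rda τ Φ

/-- `MΦ = Fix(Φ↓Φ↑)`: the full `Q`-subcategory of the presheaf `Q`-category of `D`
consisting of the presheaves fixed by the Isbell adjunction induced by `Φ`. -/
def MCat (Φ : QRel Q D E) : QCat Q where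
  Obj := Σ T : Q.Obj, {σ : Sink D T // IsDist σ ∧ isbellDown Φ (isbellUp Φ σ) = σ}
  ext p := p.1
  hom p q := QRel.lda q.2.1 p.2.1 PUnit.unit PUnit.unit
  one_le p := by
    refine le_iInf fun X => Quantaloid.le_lda.mp ?_
    exact le_of_eq (Q.one_comp _)
  comp_le p q r := by
    refine le_iInf fun X => Quantaloid.le_lda.mp ?_
    refine le_of_eq_of_le (Q.comp_assoc _ _ _) ?_
    have h1 : Q.comp (QRel.lda q.2.1 p.2.1 PUnit.unit PUnit.unit) (p.2.1 X PUnit.unit) ≤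
        q.2.1 X PUnit.unit := by
      refine le_trans (Quantaloid.comp_mono_left (iInf_le _ X) _) ?_
      exact Quantaloid.comp_lda_le _ _
    refine le_trans (Quantaloid.comp_mono_right _ h1) ?_
    refine le_trans (Quantaloid.comp_mono_left (iInf_le _ X) _) ?_
    exact Quantaloid.comp_lda_le _ _

end MCat
/-! ## Concrete categories over a base category -/

open CategoryTheory

/-- Transport of a morphism of `B` along equalities of objects. -/
def hcast {B : Type u} [Category.{u} B] {S S' T T' : B} (hS : S = S') (hT : T = T')
    (f : S ⟶ T) : S' ⟶ T' :=
  hS ▸ hT ▸ f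

/-- Transport of a set of morphisms of `B` along equalities of objects. -/
def scast {B : Type u} [Category.{u} B] {S S' T T' : B} (hS : S = S') (hT : T = T')
    (s : Set (S ⟶ T)) : Set (S' ⟶ T') :=
  hcast hS hT '' s

theorem hcast_hcast {B : Type u} [Category.{u} B] {S S' S'' T T' T'' : B}
    (h1 : S = S') (h2 : T = T') (h3 : S' = S'') (h4 : T' = T'') (f : S ⟶ T) :
    hcast h3 h4 (hcast h1 h2 f) = hcast (h1.trans h3) (h2.trans h4) f := by
  subst h1; subst h2; subst h3; subst h4; rfl

/-- A concrete category over a base category `B`, described by its objects, extents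
and hom-sets of `B`-morphisms. -/
structure ConcCat (B : Type u) [Category.{u} B] : Type (u + 1) where
  Obj : Type u
  ext : Obj → B
  hom : ∀ X Y : Obj, Set (ext X ⟶ ext Y)
  id_mem : ∀ X, 𝟙 (ext X) ∈ hom X X
  comp_mem : ∀ {X Y Z : Obj} {f : ext X ⟶ ext Y} {g : ext Y ⟶ ext Z},
      f ∈ hom X Y → g ∈ hom Y Z → f ≫ g ∈ hom X Z

variable {B : Type u} [Category.{u} B]

/-- A concrete functor over `B`. -/
structure ConcFun (D E : ConcCat B) : Type u where
  obj : D.Obj → E.Obj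
  ext : ∀ X, E.ext (obj X) = D.ext X
  mem : ∀ {X Y : D.Obj} {f : D.ext X ⟶ D.ext Y}, f ∈ D.hom X Y →
      hcast (ext X).symm (ext Y).symm f ∈ E.hom (obj X) (obj Y)

/-- The underlying (pre)order of a concrete category: `X ≤ Y` iff `|X| = |Y|` and
`1_{|X|} ∈ E(X,Y)`. -/
def ConcCat.le (E : ConcCat B) (X Y : E.Obj) : Prop :=
  ∃ h : E.ext X = E.ext Y, hcast rfl h (𝟙 (E.ext X)) ∈ E.hom X Y

/-- `X ≅ Y` in the underlying order of a concrete category. -/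
def ConcCat.iso (E : ConcCat B) (X Y : E.Obj) : Prop :=
  E.le X Y ∧ E.le Y X

/-- The identity concrete functor. -/
def ConcFun.id (E : ConcCat B) : ConcFun E E where
  obj X := X
  ext _ := rfl
  mem hf := hf

/-- Composition of concrete functors. -/
def ConcFun.comp {C D E : ConcCat B} (G : ConcFun D E) (F : ConcFun C D) :
    ConcFun C E where
  obj X := G.obj (F.obj X)
  ext X := (G.ext (F.obj X)).trans (F.ext X)
  mem {X Y f} hf := by
    have h := G.mem (F.mem hf)
    rw [hcast_hcast] at h
    exact h

/-- The full concrete subcategory on the objects satisfying `P`. -/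
def ConcCat.full (E : ConcCat B) (P : E.Obj → Prop) : ConcCat B where
  Obj := {X : E.Obj // P X}
  ext X := E.ext X.1
  hom X Y := E.hom X.1 Y.1
  id_mem X := E.id_mem X.1
  comp_mem hf hg := E.comp_mem hf hg

/-- The inclusion concrete functor of a full subcategory. -/
def ConcCat.incl (E : ConcCat B) (P : E.Obj → Prop) : ConcFun (E.full P) E where
  obj X := X.1
  ext _ := rfl
  mem hf := hf

/-- The full subcategory of fixed points of an endo concrete functor. -/
def ConcCat.fix (E : ConcCat B) (F : ConcFun E E) : ConcCat B :=
  E.full (fun X => E.iso (F.obj X) X)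

/-- A Galois correspondence `(L,R)` between concrete categories:
`E(LX,Y) = D(X,RY)` as subsets of `B(|X|,|Y|)`. -/
def Galois {D E : ConcCat B} (L : ConcFun D E) (R : ConcFun E D) : Prop :=
  ∀ (X : D.Obj) (Y : E.Obj),
    scast (L.ext X) rfl (E.hom (L.obj X) Y) = scast rfl (R.ext Y) (D.hom X (R.obj Y))

/-- An essentially surjective concrete functor. -/
def ConcFun.EssSurj {D E : ConcCat B} (F : ConcFun D E) : Prop :=
  ∀ Y : E.Obj, ∃ X : D.Obj, E.iso Y (F.obj X)

/-- Concrete equivalence of concrete categories. -/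
def ConcEquiv (D E : ConcCat B) : Prop :=
  ∃ (F : ConcFun D E) (G : ConcFun E D),
    (∀ X, D.iso (G.obj (F.obj X)) X) ∧ (∀ Y, E.iso (F.obj (G.obj Y)) Y)

/-- `Y` is an initial lifting of the `E`-structured source `(g_i : T → |X_i|)`. -/
structure IsInitialLifting (E : ConcCat B) {T : B} {ι : Type u} (X : ι → E.Obj)
    (g : ∀ i, T ⟶ E.ext (X i)) (Y : E.Obj) : Prop where
  ext : E.ext Y = T
  mem : ∀ i, hcast ext.symm rfl (g i) ∈ E.hom Y (X i)
  initial : ∀ (Z : E.Obj) (f : E.ext Z ⟶ T),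
      (∀ i, f ≫ g i ∈ E.hom Z (X i)) → hcast rfl ext.symm f ∈ E.hom Z Y

/-- `Y` is a final lifting of the `E`-structured sink `(f_i : |X_i| → T)`. -/
structure IsFinalLifting (E : ConcCat B) {T : B} {ι : Type u} (X : ι → E.Obj)
    (f : ∀ i, E.ext (X i) ⟶ T) (Y : E.Obj) : Prop where
  ext : E.ext Y = T
  mem : ∀ i, hcast rfl ext.symm (f i) ∈ E.hom (X i) Y
  final : ∀ (Z : E.Obj) (g : T ⟶ E.ext Z),
      (∀ i, f i ≫ g ∈ E.hom (X i) Z) → hcast ext.symm rfl g ∈ E.hom Y Z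

/-- A concrete category is topological over `B` if every structured source admits
an initial lifting. -/
def Topological (E : ConcCat B) : Prop :=
  ∀ (T : B) (ι : Type u) (X : ι → E.Obj) (g : ∀ i, T ⟶ E.ext (X i)),
    ∃ Y : E.Obj, IsInitialLifting E X g Y

/-- A concrete functor `F : D → E` is initially dense if every object of `E` is the
domain of an initial source with codomains in the image of `F`. -/
def InitiallyDense {D E : ConcCat B} (F : ConcFun D E) : Prop :=
  ∀ Y : E.Obj, ∃ (ι : Type u) (X : ι → D.Obj) (g : ∀ i, E.ext Y ⟶ E.ext (F.obj (X i))),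
    (∀ i, g i ∈ E.hom Y (F.obj (X i))) ∧
    ∀ (Z : E.Obj) (f : E.ext Z ⟶ E.ext Y),
      (∀ i, f ≫ g i ∈ E.hom Z (F.obj (X i))) → f ∈ E.hom Z Y

/-- A concrete functor `F : D → E` is finally dense if every object of `E` is the
codomain of a final sink with domains in the image of `F`. -/
def FinallyDense {D E : ConcCat B} (F : ConcFun D E) : Prop :=
  ∀ Y : E.Obj, ∃ (ι : Type u) (X : ι → D.Obj) (f : ∀ i, E.ext (F.obj (X i)) ⟶ E.ext Y),
    (∀ i, f i ∈ E.hom (F.obj (X i)) Y) ∧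
    ∀ (Z : E.Obj) (g : E.ext Y ⟶ E.ext Z),
      (∀ i, f i ≫ g ∈ E.hom (F.obj (X i)) Z) → g ∈ E.hom Y Z
/-! ## The free quantaloid and the `QB`-category associated to a concrete category -/

/-- The free quantaloid on a category `B`: hom-lattices are powersets of hom-sets,
with elementwise composition. -/
def freeQuantaloid (B : Type u) [Category.{u} B] : Quantaloid.{u} where
  Obj := B
  Hom S T := Set (S ⟶ T)
  lat _ _ := inferInstance
  comp := fun {S T U} g f => {h | ∃ a ∈ f, ∃ b ∈ g, a ≫ b = h}
  one S := {𝟙 S}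
  comp_assoc := by
    intro S T U V w v u
    ext h
    constructor
    · rintro ⟨a, ha, b, ⟨c, hc, d, hd, rfl⟩, rfl⟩
      exact ⟨a ≫ c, ⟨a, ha, c, hc, rfl⟩, d, hd, by simp⟩
    · rintro ⟨a, ⟨c, hc, e, he, rfl⟩, b, hb, rfl⟩
      exact ⟨c, hc, e ≫ b, ⟨e, he, b, hb, rfl⟩, by simp⟩
  comp_one := by
    intro S T u
    ext h
    simp
  one_comp := by
    intro S T u
    ext h
    simp
  comp_sSup := by
    intro S T U v s
    ext h
    simp only [Set.sSup_eq_sUnion, Set.mem_sUnion, Set.iSup_eq_iUnion, Set.mem_iUnion,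
      Set.mem_setOf_eq]
    constructor
    · rintro ⟨a, ⟨t, ht, hat⟩, b, hb, rfl⟩
      exact ⟨t, ht, a, hat, b, hb, rfl⟩
    · rintro ⟨t, ht, a, hat, b, hb, rfl⟩
      exact ⟨a, ⟨t, ht, hat⟩, b, hb, rfl⟩
  sSup_comp := by
    intro S T U s u
    ext h
    simp only [Set.sSup_eq_sUnion, Set.mem_sUnion, Set.iSup_eq_iUnion, Set.mem_iUnion,
      Set.mem_setOf_eq]
    constructor
    · rintro ⟨a, ha, b, ⟨t, ht, hbt⟩, rfl⟩
      exact ⟨t, ht, a, ha, b, hbt, rfl⟩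
    · rintro ⟨t, ht, a, ha, b, hbt, rfl⟩
      exact ⟨a, ha, b, ⟨t, ht, hbt⟩, rfl⟩

variable {B : Type u} [Category.{u} B]

instance {S T : B} : Membership (S ⟶ T) ((freeQuantaloid B).Hom S T) :=
  inferInstanceAs (Membership (S ⟶ T) (Set (S ⟶ T)))

theorem mem_qcast {S S' T T' : B} (hS : S = S') (hT : T = T')
    (s : Set (S ⟶ T)) (f : S' ⟶ T') :
    f ∈ (freeQuantaloid B).cast hS hT s ↔ hcast hS.symm hT.symm f ∈ s := by
  subst hS; subst hT; exact Iff.rfl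

/-- The `QB`-category associated to a concrete category over `B`. -/
def ConcCat.bar (E : ConcCat B) : QCat (freeQuantaloid B) where
  Obj := E.Obj
  ext := E.ext
  hom := E.hom
  one_le X := by
    intro h hh
    rcases hh with rfl
    exact E.id_mem X
  comp_le X Y Z := by
    rintro h ⟨a, ha, b, hb, rfl⟩
    exact E.comp_mem ha hb

/-- The `QB`-functor associated to a concrete functor over `B`. -/
def ConcFun.bar {D E : ConcCat B} (F : ConcFun D E) : QFun D.bar E.bar where
  obj := F.obj
  ext := F.ext
  hom_le X Y := by
    intro f hf
    exact (mem_qcast (F.ext X) (F.ext Y) _ f).mpr (F.mem hf)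

/-- The source on the `QB`-category `Ē` associated to an `E`-structured source
`(g_i : T → |X_i|)`, given by `τ̄(X) = {g_i ∣ X_i = X}`. -/
def barSource (E : ConcCat B) {T : B} {ι : Type u} (X : ι → E.Obj)
    (g : ∀ i, T ⟶ E.ext (X i)) : Source E.bar T :=
  fun _ Z => {f | ∃ (i : ι) (h : X i = Z), hcast rfl (congrArg E.ext h) (g i) = f}

/-- The sink on the `QB`-category `Ē` associated to an `E`-structured sink
`(f_i : |X_i| → T)`, given by `σ̄(X) = {f_i ∣ X_i = X}`. -/
def barSink (E : ConcCat B) {T : B} {ι : Type u} (X : ι → E.Obj)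
    (f : ∀ i, E.ext (X i) ⟶ T) : Sink E.bar T :=
  fun Z _ => {h | ∃ (i : ι) (hE : X i = Z), hcast (congrArg E.ext hE) rfl (f i) = h}

/-!
`MΦ` carries the dense functor `A ↦ Φ↓Φ↑(D(−, A))` and the codense functor `B ↦ Φ(−, B)`,
whose homs recover `Φ`, and both properties transfer along an isomorphism `X ≅ MΦ`.
Conversely, density of `F` makes `x ↦ X(F−, x)` fully faithful, and `Φ(A, B) = X(FA, GB)`
together with codensity of `G` gives `Φ↑X(F−, x) = X(x, G−)` and `Φ↓X(x, G−) = X(F−, x)`, so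
this presheaf lies in `MΦ`. Every `σ` in `MΦ` is reached: by totality `x = colim_σ F` exists,
and then `σ = Φ↓Φ↑σ = Φ↓X(x, G−) = X(F−, x)`. Separatedness makes the map injective.
-/

namespace Quantaloid

variable {Q : Quantaloid.{u}}

theorem cast_eq_iff {S S' T T' : Q.Obj} (hS : S = S') (hT : T = T') {u : Q.Hom S T}
    {v : Q.Hom S' T'} : Q.cast hS hT u = v ↔ u = Q.cast hS.symm hT.symm v := by
  subst hS; subst hT; exact Iff.rfl

theorem cast_self {S T : Q.Obj} (hS : S = S) (hT : T = T) (u : Q.Hom S T) :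
    Q.cast hS hT u = u := rfl

theorem cast_comp {S S' T T' U U' : Q.Obj} (hS : S = S') (hT : T = T') (hU : U = U')
    (v : Q.Hom T U) (u : Q.Hom S T) :
    Q.cast hS hU (Q.comp v u) = Q.comp (Q.cast hT hU v) (Q.cast hS hT u) := by
  subst hS; subst hT; subst hU; rfl

theorem lda_cast {S T T' U U' : Q.Obj} (hT : T = T') (hU : U = U') (w : Q.Hom S U)
    (u : Q.Hom S T) : Q.lda (Q.cast rfl hU w) (Q.cast rfl hT u) = Q.cast hT hU (Q.lda w u) := by
  subst hT; subst hU; rfl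

theorem rda_cast {S S' T T' U : Q.Obj} (hS : S = S') (hT : T = T') (v : Q.Hom T U)
    (w : Q.Hom S U) : Q.rda (Q.cast hT rfl v) (Q.cast hS rfl w) = Q.cast hS hT (Q.rda v w) := by
  subst hS; subst hT; rfl

theorem cast_iInf {ι : Sort*} {S S' T T' : Q.Obj} (hS : S = S') (hT : T = T')
    (f : ι → Q.Hom S T) : Q.cast hS hT (⨅ i, f i) = ⨅ i, Q.cast hS hT (f i) := by
  subst hS; subst hT; rfl

theorem cast_one_trans {S S' T T' : Q.Obj} (hS : S = S') (hT : T = T') (h : S = T) :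
    Q.cast rfl (hS.symm.trans (h.trans hT)) (Q.one S') = Q.cast hS hT (Q.cast rfl h (Q.one S)) := by
  subst hS; subst hT; subst h; rfl

theorem comp_cast_one {S T U : Q.Obj} (h : S = T) (u : Q.Hom T U) :
    Q.comp u (Q.cast rfl h (Q.one S)) = Q.cast h.symm rfl u := by
  subst h; exact Q.comp_one u

theorem lda_anti_right {S T U : Q.Obj} (w : Q.Hom S U) {u u' : Q.Hom S T} (h : u ≤ u') :
    Q.lda w u' ≤ Q.lda w u :=
  le_lda.mp (le_trans (comp_mono_right _ h) (comp_lda_le w u'))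

theorem rda_anti_left {S T U : Q.Obj} {v v' : Q.Hom T U} (h : v ≤ v') (w : Q.Hom S U) :
    Q.rda v' w ≤ Q.rda v w :=
  le_rda.mp (le_trans (comp_mono_left h _) (comp_rda_le v' w))

theorem le_iInf_lda_iff {ι : Sort*} {S : ι → Q.Obj} {T U : Q.Obj}
    {w : ∀ i, Q.Hom (S i) U} {u : ∀ i, Q.Hom (S i) T} {v : Q.Hom T U} :
    v ≤ ⨅ i, Q.lda (w i) (u i) ↔ ∀ i, Q.comp v (u i) ≤ w i := by
  simp only [le_iInf_iff, le_lda]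

theorem le_iInf_rda_iff {ι : Sort*} {S U : Q.Obj} {T : ι → Q.Obj}
    {v : ∀ i, Q.Hom U (T i)} {w : ∀ i, Q.Hom S (T i)} {x : Q.Hom S U} :
    x ≤ ⨅ i, Q.rda (v i) (w i) ↔ ∀ i, Q.comp (v i) x ≤ w i := by
  simp only [le_iInf_iff, le_rda]

theorem comp_iSup {ι : Sort*} {S T U : Q.Obj} (v : Q.Hom T U) (u : ι → Q.Hom S T) :
    Q.comp v (⨆ i, u i) = ⨆ i, Q.comp v (u i) := by
  rw [show (⨆ i, u i) = sSup (Set.range u) from rfl, Q.comp_sSup, iSup_range]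

theorem lda_iSup {ι : Sort*} {S T U : Q.Obj} (w : Q.Hom S U) (u : ι → Q.Hom S T) :
    Q.lda w (⨆ i, u i) = ⨅ i, Q.lda w (u i) :=
  eq_of_forall_le_iff fun v => by
    rw [← le_lda, comp_iSup, iSup_le_iff, le_iInf_iff]
    simp only [le_lda]

theorem lda_iInf {ι : Sort*} {S T U : Q.Obj} (w : ι → Q.Hom S U) (u : Q.Hom S T) :
    Q.lda (⨅ i, w i) u = ⨅ i, Q.lda (w i) u :=
  eq_of_forall_le_iff fun v => by rw [← le_lda, le_iInf_iff, le_iInf_iff]; simp only [le_lda]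

theorem lda_comp {S T U V : Q.Obj} (w : Q.Hom S V) (u : Q.Hom T U) (v : Q.Hom S T) :
    Q.lda w (Q.comp u v) = Q.lda (Q.lda w v) u :=
  eq_of_forall_le_iff fun x => by rw [← le_lda, ← le_lda, ← le_lda, Q.comp_assoc]

end Quantaloid

open Quantaloid

section QFun

variable {Q : Quantaloid.{u}} {D E X : QCat Q}

theorem QCat.hom_congr {p p' q q' : X.Obj} (hp : p = p') (hq : q = q') :
    X.hom p' q' = Q.cast (congrArg X.ext hp) (congrArg X.ext hq) (X.hom p q) := by
  subst hp; subst hq; rfl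

theorem QCat.le_of_eq {p q : X.Obj} (h : p = q) : X.le p q := by
  subst h; exact ⟨rfl, X.one_le p⟩

def QFun.graphSink (F : QFun D X) (x : X.Obj) : Sink D (X.ext x) := fun A _ => F.graph A x

def QFun.cographSource (G : QFun E X) (x : X.Obj) : Source E (X.ext x) :=
  fun _ B => G.cograph x B

theorem QFun.comp_graph_le (F : QFun D X) (A : D.Obj) (x z : X.Obj) :
    Q.comp (X.hom x z) (F.graph A x) ≤ F.graph A z :=
  le_trans (le_of_eq (cast_comp (F.ext A) rfl rfl _ _).symm)
    (cast_mono (F.ext A) rfl (X.comp_le (F.obj A) x z))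

theorem QFun.cograph_comp_le (G : QFun E X) (B : E.Obj) (x z : X.Obj) :
    Q.comp (G.cograph x B) (X.hom z x) ≤ G.cograph z B :=
  le_trans (le_of_eq (cast_comp rfl rfl (G.ext B) _ _).symm)
    (cast_mono rfl (G.ext B) (X.comp_le z x (G.obj B)))

theorem QFun.dense_iff {F : QFun D X} :
    F.Dense ↔ ∀ x z, ⨅ A, Q.lda (F.graph A z) (F.graph A x) = X.hom x z := by
  refine ⟨fun hF x z => le_antisymm ?_ ?_, fun h x => ⟨X.ext x, F.graphSink x, rfl,
    fun z => (h x z).symm⟩⟩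
  · obtain ⟨T, σ, hext, hhom⟩ := hF x
    subst hext
    have hσ : ∀ A, σ A PUnit.unit ≤ F.graph A x := fun A =>
      le_trans (le_of_eq (Q.one_comp _).symm)
        (le_iInf_lda_iff.mp (le_trans (X.one_le x) (le_of_eq (hhom x))) A)
    exact le_trans (iInf_mono fun A => lda_anti_right _ (hσ A)) (le_of_eq (hhom z).symm)
  · exact le_iInf_lda_iff.mpr fun A => F.comp_graph_le A x z

theorem QFun.codense_iff {G : QFun E X} :
    G.Codense ↔ ∀ x z, ⨅ B, Q.rda (G.cograph x B) (G.cograph z B) = X.hom z x := by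
  refine ⟨fun hG x z => le_antisymm ?_ ?_, fun h x => ⟨X.ext x, G.cographSource x, rfl,
    fun z => (h x z).symm⟩⟩
  · obtain ⟨T, τ, hext, hhom⟩ := hG x
    subst hext
    have hτ : ∀ B, τ PUnit.unit B ≤ G.cograph x B := fun B =>
      le_trans (le_of_eq (Q.comp_one _).symm)
        (le_iInf_rda_iff.mp (le_trans (X.one_le x) (le_of_eq (hhom x))) B)
    exact le_trans (iInf_mono fun B => rda_anti_left (hτ B) _) (le_of_eq (hhom z).symm)
  · exact le_iInf_rda_iff.mpr fun B => G.cograph_comp_le B x z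

theorem QFun.Dense.isColim_graphSink {F : QFun D X} (hF : F.Dense) (x : X.Obj) :
    IsColim F (F.graphSink x) x :=
  ⟨rfl, fun z => (dense_iff.mp hF x z).symm⟩

theorem QFun.Codense.isLim_cographSource {G : QFun E X} (hG : G.Codense) (x : X.Obj) :
    IsLim G (G.cographSource x) x :=
  ⟨rfl, fun z => (codense_iff.mp hG x z).symm⟩

theorem QFun.graph_eq_iInf_lda (F : QFun D X) (A : D.Obj) (z : X.Obj) :
    F.graph A z = ⨅ x, Q.lda (X.hom x z) (F.cograph x A) := by
  refine eq_of_forall_le_iff fun v => ?_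
  rw [le_iInf_lda_iff]
  refine ⟨fun h x => le_trans (comp_mono_left h _) ?_, fun h => ?_⟩
  · exact le_trans (le_of_eq (cast_comp rfl (F.ext A) rfl _ _).symm) (X.comp_le x (F.obj A) z)
  · have hv : Q.cast (F.ext A).symm rfl v ≤ X.hom (F.obj A) z := by
      rw [← comp_cast_one (F.ext A)]
      exact le_trans (comp_mono_right v (cast_mono rfl (F.ext A) (X.one_le (F.obj A))))
        (h (F.obj A))
    calc v = Q.cast (F.ext A) rfl (Q.cast (F.ext A).symm rfl v) := by
          rw [Quantaloid.cast_cast]; rfl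
      _ ≤ F.graph A z := cast_mono (F.ext A) rfl hv

theorem QCat.Total.exists_isColim (htot : X.Total) (F : QFun D X) {T : Q.Obj}
    (σ : Sink D T) : ∃ x, IsColim F σ x := by
  -- `colim_σ F` is the supremum of the sink `σ ∘ F^♮`.
  obtain ⟨x, hext, hhom⟩ := htot T (QRel.comp σ F.cograph)
  refine ⟨x, hext, fun z => (hhom z).trans ?_⟩
  calc ⨅ x', Q.lda (X.hom x' z) (⨆ A, Q.comp (σ A PUnit.unit) (F.cograph x' A))
      = ⨅ x', ⨅ A, Q.lda (Q.lda (X.hom x' z) (F.cograph x' A)) (σ A PUnit.unit) := by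
        simp only [lda_iSup, lda_comp]
    _ = ⨅ A, Q.lda (F.graph A z) (σ A PUnit.unit) := by
        rw [iInf_comm]
        simp only [F.graph_eq_iInf_lda, lda_iInf]

def QFun.FullyFaithful (F : QFun D E) : Prop :=
  ∀ a b, D.hom a b = Q.cast (F.ext a) (F.ext b) (E.hom (F.obj a) (F.obj b))

end QFun

namespace QFun

variable {Q : Quantaloid.{u}} {D E X M : QCat Q} {K : QFun M X}

theorem fullyFaithful_of_leftInverse (H : QFun X M)
    (hHK : Function.LeftInverse H.obj K.obj) : K.FullyFaithful := fun p q => by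
  refine le_antisymm (K.hom_le p q) ?_
  refine le_trans (cast_mono _ _ (H.hom_le (K.obj p) (K.obj q))) (le_of_eq ?_)
  rw [Quantaloid.cast_cast, QCat.hom_congr (hHK p).symm (hHK q).symm, Quantaloid.cast_cast,
    cast_self]

namespace FullyFaithful

theorem hom_eq (hK : K.FullyFaithful) (p q : M.Obj) :
    X.hom (K.obj p) (K.obj q) = Q.cast (K.ext p).symm (K.ext q).symm (M.hom p q) :=
  (cast_eq_iff _ _).mp (hK p q).symm

theorem injective (hK : K.FullyFaithful) (hsep : M.Separated) : Function.Injective K.obj := by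
  have hle : ∀ {p q}, K.obj p = K.obj q → M.le p q := fun {p q} h => by
    obtain ⟨e, he⟩ := X.le_of_eq h
    refine ⟨(K.ext p).symm.trans (e.trans (K.ext q)), ?_⟩
    rw [hK p q, cast_one_trans (K.ext p) (K.ext q) e]
    exact cast_mono _ _ he
  exact fun p q h => hsep p q ⟨hle h, hle h.symm⟩

theorem graph_comp (hK : K.FullyFaithful) (F : QFun D M) (A : D.Obj) (p : M.Obj) :
    (K.comp F).graph A (K.obj p) = Q.cast rfl (K.ext p).symm (F.graph A p) := by
  change Q.cast ((K.ext (F.obj A)).trans (F.ext A)) rfl (X.hom (K.obj (F.obj A)) (K.obj p)) = _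
  rw [hom_eq hK, Quantaloid.cast_cast, QFun.graph, Quantaloid.cast_cast]

theorem cograph_comp (hK : K.FullyFaithful) (G : QFun E M) (B : E.Obj) (p : M.Obj) :
    (K.comp G).cograph (K.obj p) B = Q.cast (K.ext p).symm rfl (G.cograph p B) := by
  change Q.cast rfl ((K.ext (G.obj B)).trans (G.ext B)) (X.hom (K.obj p) (K.obj (G.obj B))) = _
  rw [hom_eq hK, Quantaloid.cast_cast, QFun.cograph, Quantaloid.cast_cast]

theorem dense_comp (hK : K.FullyFaithful) (hsurj : Function.Surjective K.obj) {F : QFun D M}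
    (hF : F.Dense) : (K.comp F).Dense := by
  rw [dense_iff] at hF ⊢
  intro x z
  obtain ⟨p, rfl⟩ := hsurj x
  obtain ⟨q, rfl⟩ := hsurj z
  simp only [graph_comp hK, lda_cast, ← cast_iInf, hF, hom_eq hK]

theorem codense_comp (hK : K.FullyFaithful) (hsurj : Function.Surjective K.obj) {G : QFun E M}
    (hG : G.Codense) : (K.comp G).Codense := by
  rw [codense_iff] at hG ⊢
  intro x z
  obtain ⟨p, rfl⟩ := hsurj x
  obtain ⟨q, rfl⟩ := hsurj z
  simp only [cograph_comp hK, rda_cast, ← cast_iInf, hG, hom_eq hK]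

theorem qIso (hK : K.FullyFaithful) (hsep : M.Separated) (hsurj : Function.Surjective K.obj) :
    QIso M X := by
  have hinv := Function.surjInv_eq hsurj
  refine ⟨K, ⟨Function.surjInv hsurj, fun x => (K.ext _).symm.trans (congrArg X.ext (hinv x)),
    fun x y => ?_⟩, fun p => hK.injective hsep (hinv (K.obj p)), hinv⟩
  rw [hK, Quantaloid.cast_cast, QCat.hom_congr (hinv x) (hinv y)]

end FullyFaithful

end QFun

section Isbell

variable {Q : Quantaloid.{u}} {D E : QCat Q} {Φ : QRel Q D E}

theorem IsDist.comp_hom_le (hΦ : IsDist Φ) (A A' : D.Obj) (B : E.Obj) :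
    Q.comp (Φ A' B) (D.hom A A') ≤ Φ A B := by
  refine le_trans ?_ (hΦ A B)
  refine le_trans (le_of_eq (Q.one_comp _).symm) (le_trans (comp_mono_left (E.one_le B) _) ?_)
  exact le_trans (comp_mono_right _ (le_iSup (fun A' => Q.comp (Φ A' B) (D.hom A A')) A'))
    (le_iSup (fun B' => Q.comp (E.hom B' B) (QRel.comp Φ D.homRel A B')) B)

theorem IsDist.hom_comp_le (hΦ : IsDist Φ) (A : D.Obj) (B B' : E.Obj) :
    Q.comp (E.hom B B') (Φ A B) ≤ Φ A B' := by
  refine le_trans ?_ (hΦ A B')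
  refine le_trans (comp_mono_right _ (le_trans (le_of_eq (Q.comp_one _).symm)
    (comp_mono_right _ (D.one_le A)))) ?_
  exact le_trans (comp_mono_right _ (le_iSup (fun A' => Q.comp (Φ A' B) (D.hom A A')) A))
    (le_iSup (fun B'' => Q.comp (E.hom B'' B') (QRel.comp Φ D.homRel A B'')) B)

theorem isDist_of_comp_hom_le {T : Q.Obj} {σ : Sink D T}
    (h : ∀ A A', Q.comp (σ A' PUnit.unit) (D.hom A A') ≤ σ A PUnit.unit) : IsDist σ := by
  rintro A ⟨⟩
  refine iSup_le fun _ => le_trans (le_of_eq (Q.one_comp _)) (iSup_le fun A' => h A A')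

theorem isbellUp_apply {T : Q.Obj} (σ : Sink D T) (B : E.Obj) :
    isbellUp Φ σ PUnit.unit B = ⨅ A, Q.lda (Φ A B) (σ A PUnit.unit) := rfl

theorem isbellDown_apply {T : Q.Obj} (τ : Source E T) (A : D.Obj) :
    isbellDown Φ τ A PUnit.unit = ⨅ B, Q.rda (τ PUnit.unit B) (Φ A B) := rfl

theorem le_isbellDown_isbellUp {T : Q.Obj} (σ : Sink D T) (A : D.Obj) :
    σ A PUnit.unit ≤ isbellDown Φ (isbellUp Φ σ) A PUnit.unit :=
  le_iInf_rda_iff.mpr fun _ => le_trans (comp_mono_left (iInf_le _ A) _) (comp_lda_le _ _)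

theorem le_isbellUp_isbellDown {T : Q.Obj} (τ : Source E T) (B : E.Obj) :
    τ PUnit.unit B ≤ isbellUp Φ (isbellDown Φ τ) PUnit.unit B :=
  le_iInf_lda_iff.mpr fun _ => le_trans (comp_mono_right _ (iInf_le _ B)) (comp_rda_le _ _)

theorem isbellUp_isbellDown_isbellUp {T : Q.Obj} (σ : Sink D T) :
    isbellUp Φ (isbellDown Φ (isbellUp Φ σ)) = isbellUp Φ σ := by
  funext _ B
  exact le_antisymm (iInf_mono fun A => lda_anti_right _ (le_isbellDown_isbellUp σ A))
    (le_isbellUp_isbellDown (isbellUp Φ σ) B)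

theorem isbellDown_isbellUp_isbellDown {T : Q.Obj} (τ : Source E T) :
    isbellDown Φ (isbellUp Φ (isbellDown Φ τ)) = isbellDown Φ τ := by
  funext A _
  exact le_antisymm (iInf_mono fun B => rda_anti_left (le_isbellUp_isbellDown τ B) _)
    (le_isbellDown_isbellUp (isbellDown Φ τ) A)

/-- The Isbell adjunction on hom-arrows: `PD(σ, Φ↓τ) = P†E(Φ↑σ, τ)`. -/
theorem iInf_lda_isbellDown {T T' : Q.Obj} (σ : Sink D T) (τ : Source E T') :
    ⨅ A, Q.lda (isbellDown Φ τ A PUnit.unit) (σ A PUnit.unit) =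
      ⨅ B, Q.rda (τ PUnit.unit B) (isbellUp Φ σ PUnit.unit B) := by
  refine eq_of_forall_le_iff fun w => ?_
  simp only [le_iInf_lda_iff, le_iInf_rda_iff, isbellDown_apply, isbellUp_apply, Q.comp_assoc]
  exact forall_comm

theorem isbellDown_isDist (hΦ : IsDist Φ) {T : Q.Obj} (τ : Source E T) :
    IsDist (isbellDown Φ τ) :=
  isDist_of_comp_hom_le fun A A' => le_iInf_rda_iff.mpr fun B => by
    rw [← Q.comp_assoc]
    exact le_trans (comp_mono_left (le_trans (comp_mono_right _ (iInf_le _ B))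
      (comp_rda_le _ _)) _) (hΦ.comp_hom_le A A' B)

def QCat.yonedaSink (D : QCat Q) (A : D.Obj) : Sink D (D.ext A) := fun A' _ => D.hom A' A

def QCat.yonedaSource (E : QCat Q) (B : E.Obj) : Source E (E.ext B) := fun _ B' => E.hom B B'

theorem isbellUp_yonedaSink (hΦ : IsDist Φ) (A : D.Obj) (B : E.Obj) :
    isbellUp Φ (D.yonedaSink A) PUnit.unit B = Φ A B := by
  refine eq_of_forall_le_iff fun w => ?_
  rw [isbellUp_apply, le_iInf_lda_iff]
  refine ⟨fun h => le_trans ?_ (h A),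
    fun h A' => le_trans (comp_mono_left h _) (hΦ.comp_hom_le A' A B)⟩
  exact le_trans (le_of_eq (Q.comp_one w).symm) (comp_mono_right _ (D.one_le A))

theorem isbellDown_yonedaSource (hΦ : IsDist Φ) (A : D.Obj) (B : E.Obj) :
    isbellDown Φ (E.yonedaSource B) A PUnit.unit = Φ A B := by
  refine eq_of_forall_le_iff fun w => ?_
  rw [isbellDown_apply, le_iInf_rda_iff]
  refine ⟨fun h => le_trans ?_ (h B),
    fun h B' => le_trans (comp_mono_right _ h) (hΦ.hom_comp_le A B B')⟩
  exact le_trans (le_of_eq (Q.one_comp w).symm) (comp_mono_left (E.one_le B) _)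

end Isbell

namespace MCat

variable {Q : Quantaloid.{u}} {D E : QCat Q} {Φ : QRel Q D E}

theorem hom_eq_iInf_rda (p q : (MCat Φ).Obj) :
    (MCat Φ).hom p q = ⨅ B, Q.rda (isbellUp Φ q.2.1 PUnit.unit B)
      (isbellUp Φ p.2.1 PUnit.unit B) := by
  rw [← iInf_lda_isbellDown, q.2.2.2]
  rfl

def ofSource (hΦ : IsDist Φ) {T : Q.Obj} (τ : Source E T) : (MCat Φ).Obj :=
  ⟨T, isbellDown Φ τ, isbellDown_isDist hΦ τ, isbellDown_isbellUp_isbellDown τ⟩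

theorem hom_ofSource (hΦ : IsDist Φ) {T : Q.Obj} (τ : Source E T) (q : (MCat Φ).Obj) :
    (MCat Φ).hom (ofSource hΦ τ) q =
      ⨅ B, Q.rda (isbellUp Φ q.2.1 PUnit.unit B) (isbellUp Φ (isbellDown Φ τ) PUnit.unit B) :=
  hom_eq_iInf_rda _ q

def yonedaObj (hΦ : IsDist Φ) (A : D.Obj) : (MCat Φ).Obj :=
  ofSource hΦ (isbellUp Φ (D.yonedaSink A))

/-- The object `Φ(−, B) = Φ↓(E(B, −))` of `MΦ`. -/
def coyonedaObj (hΦ : IsDist Φ) (B : E.Obj) : (MCat Φ).Obj :=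
  ofSource hΦ (E.yonedaSource B)

theorem hom_yonedaObj (hΦ : IsDist Φ) (A : D.Obj) (q : (MCat Φ).Obj) :
    (MCat Φ).hom (yonedaObj hΦ A) q = q.2.1 A PUnit.unit := by
  refine (hom_ofSource hΦ _ q).trans ?_
  rw [isbellUp_isbellDown_isbellUp]
  simp only [isbellUp_yonedaSink hΦ]
  exact congrFun (congrFun q.2.2.2 A) PUnit.unit

theorem hom_coyonedaObj (hΦ : IsDist Φ) (p : (MCat Φ).Obj) (B : E.Obj) :
    (MCat Φ).hom p (coyonedaObj hΦ B) = isbellUp Φ p.2.1 PUnit.unit B :=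
  iInf_congr fun A => congrArg (Q.lda · _) (isbellDown_yonedaSource hΦ A B)

def yoneda (hΦ : IsDist Φ) : QFun D (MCat Φ) where
  obj := yonedaObj hΦ
  ext _ := rfl
  hom_le A A' := by
    refine le_trans ?_ (le_of_eq (hom_yonedaObj hΦ A (yonedaObj hΦ A')).symm)
    refine le_iInf_rda_iff.mpr fun B => ?_
    rw [isbellUp_yonedaSink hΦ]
    exact hΦ.comp_hom_le A A' B

def coyoneda (hΦ : IsDist Φ) : QFun E (MCat Φ) where
  obj := coyonedaObj hΦ
  ext _ := rfl
  hom_le B B' := by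
    refine le_trans ?_ (le_of_eq (hom_coyonedaObj hΦ (coyonedaObj hΦ B) B').symm)
    exact le_iInf_lda_iff.mpr fun A =>
      le_trans (comp_mono_right _ (isbellDown_yonedaSource hΦ A B).le) (hΦ.hom_comp_le A B B')

theorem hom_yoneda_coyoneda (hΦ : IsDist Φ) (A : D.Obj) (B : E.Obj) :
    (MCat Φ).hom ((yoneda hΦ).obj A) ((coyoneda hΦ).obj B) = Φ A B :=
  (hom_yonedaObj hΦ A _).trans (isbellDown_yonedaSource hΦ A B)

theorem yoneda_dense (hΦ : IsDist Φ) : (yoneda hΦ).Dense :=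
  QFun.dense_iff.mpr fun p q => iInf_congr fun A => by
    simp only [QFun.graph, yoneda, hom_yonedaObj]
    rfl

theorem coyoneda_codense (hΦ : IsDist Φ) : (coyoneda hΦ).Codense :=
  QFun.codense_iff.mpr fun p q => by
    simp only [QFun.cograph, coyoneda, hom_coyonedaObj]
    exact (hom_eq_iInf_rda q p).symm

end MCat

section Representation

variable {Q : Quantaloid.{u}} {D E X : QCat Q} {Φ : QRel Q D E}

theorem exists_dense_codense_of_qIso (hΦ : IsDist Φ) (h : QIso X (MCat Φ)) :
    ∃ (F : QFun D X) (G : QFun E X), F.Dense ∧ G.Codense ∧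
      ∀ A B, Φ A B = Q.cast (F.ext A) (G.ext B) (X.hom (F.obj A) (G.obj B)) := by
  obtain ⟨H, K, hKH, hHK⟩ := h
  have hK : K.FullyFaithful := QFun.fullyFaithful_of_leftInverse H hHK
  have hsurj : Function.Surjective K.obj := fun x => ⟨H.obj x, hKH x⟩
  refine ⟨K.comp (MCat.yoneda hΦ), K.comp (MCat.coyoneda hΦ),
    hK.dense_comp hsurj (MCat.yoneda_dense hΦ), hK.codense_comp hsurj (MCat.coyoneda_codense hΦ),
    fun A B => (MCat.hom_yoneda_coyoneda hΦ A B).symm.trans (hK _ _)⟩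

variable {F : QFun D X} {G : QFun E X}

theorem QFun.graphSink_isDist (F : QFun D X) (x : X.Obj) : IsDist (F.graphSink x) :=
  isDist_of_comp_hom_le fun A A' =>
    le_trans (comp_mono_right _ (F.hom_le A A'))
      (le_trans (le_of_eq (cast_comp (F.ext A) (F.ext A') rfl _ _).symm)
        (cast_mono _ _ (X.comp_le _ _ _)))

theorem isbellUp_eq_cographSource
    (hFG : ∀ A B, Φ A B = Q.cast (F.ext A) (G.ext B) (X.hom (F.obj A) (G.obj B)))
    {x : X.Obj} {σ : Sink D (X.ext x)} (hc : IsColim F σ x) :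
    isbellUp Φ σ = G.cographSource x := by
  funext _ B
  have hx : X.hom x (G.obj B) = ⨅ A, Q.lda (F.graph A (G.obj B)) (σ A PUnit.unit) :=
    hc.hom (G.obj B)
  show ⨅ A, Q.lda (Φ A B) (σ A PUnit.unit) = Q.cast rfl (G.ext B) (X.hom x (G.obj B))
  rw [hx]
  refine Eq.trans (iInf_congr fun A => ?_) (cast_iInf rfl (G.ext B) _).symm
  rw [hFG, ← lda_cast rfl (G.ext B), QFun.graph, Quantaloid.cast_cast]
  rfl

theorem isbellDown_eq_graphSink
    (hFG : ∀ A B, Φ A B = Q.cast (F.ext A) (G.ext B) (X.hom (F.obj A) (G.obj B)))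
    {x : X.Obj} {τ : Source E (X.ext x)} (hl : IsLim G τ x) :
    isbellDown Φ τ = F.graphSink x := by
  funext A _
  have hx : X.hom (F.obj A) x = ⨅ B, Q.rda (τ PUnit.unit B) (G.cograph (F.obj A) B) :=
    hl.hom (F.obj A)
  show ⨅ B, Q.rda (τ PUnit.unit B) (Φ A B) = Q.cast (F.ext A) rfl (X.hom (F.obj A) x)
  rw [hx]
  refine Eq.trans (iInf_congr fun B => ?_) (cast_iInf (F.ext A) rfl _).symm
  rw [hFG, ← rda_cast (F.ext A) rfl, QFun.cograph, Quantaloid.cast_cast]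
  rfl

variable (Φ) in
def MCat.comparison (hF : F.Dense) (hG : G.Codense)
    (hFG : ∀ A B, Φ A B = Q.cast (F.ext A) (G.ext B) (X.hom (F.obj A) (G.obj B))) :
    QFun X (MCat Φ) where
  obj x := ⟨X.ext x, F.graphSink x, F.graphSink_isDist x, by
    rw [isbellUp_eq_cographSource hFG (hF.isColim_graphSink x),
      isbellDown_eq_graphSink hFG (hG.isLim_cographSource x)]⟩
  ext _ := rfl
  hom_le x y := (QFun.dense_iff.mp hF x y).ge

theorem MCat.comparison_fullyFaithful (hF : F.Dense) (hG : G.Codense)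
    (hFG : ∀ A B, Φ A B = Q.cast (F.ext A) (G.ext B) (X.hom (F.obj A) (G.obj B))) :
    (MCat.comparison Φ hF hG hFG).FullyFaithful :=
  fun x y => (QFun.dense_iff.mp hF x y).symm

theorem MCat.comparison_surjective (htot : X.Total) (hF : F.Dense) (hG : G.Codense)
    (hFG : ∀ A B, Φ A B = Q.cast (F.ext A) (G.ext B) (X.hom (F.obj A) (G.obj B))) :
    Function.Surjective (MCat.comparison Φ hF hG hFG).obj := by
  rintro ⟨T, σ, -, hfix⟩
  obtain ⟨x, hc⟩ := htot.exists_isColim F σ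
  obtain rfl := hc.ext
  obtain rfl : F.graphSink x = σ := by
    rw [← hfix, isbellUp_eq_cographSource hFG hc,
      isbellDown_eq_graphSink hFG (hG.isLim_cographSource x)]
  exact ⟨x, rfl⟩

theorem qIso_MCat_of_dense_codense (hsep : X.Separated) (htot : X.Total) (hF : F.Dense)
    (hG : G.Codense)
    (hFG : ∀ A B, Φ A B = Q.cast (F.ext A) (G.ext B) (X.hom (F.obj A) (G.obj B))) :
    QIso X (MCat Φ) :=
  (MCat.comparison_fullyFaithful hF hG hFG).qIso hsep (MCat.comparison_surjective htot hF hG hFG)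

end Representation

/-- Theorem 7.11: for a `Q`-distributor `Φ : D ⇸ E`, a separated
total `Q`-category `X` is isomorphic to `MΦ = Fix(Φ↓Φ↑)` if and only if there exist a
dense `Q`-functor `F : D → X` and a codense `Q`-functor `G : E → X` with
`Φ(A,B) = X(FA,GB)` for all objects `A` of `D` and `B` of `E`. -/
theorem MCat_representation {Q : Quantaloid.{u}} {D E : QCat Q}
    (Φ : QRel Q D E) (hΦ : IsDist Φ)
    (X : QCat Q) (hsep : X.Separated) (htot : X.Total) :
    QIso X (MCat Φ) ↔
      ∃ (F : QFun D X) (G : QFun E X), F.Dense ∧ G.Codense ∧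
        ∀ (A : D.Obj) (B : E.Obj),
          Φ A B = Q.cast (F.ext A) (G.ext B) (X.hom (F.obj A) (G.obj B)) :=
  ⟨exists_dense_codense_of_qIso hΦ,
    fun ⟨_, _, hF, hG, hFG⟩ => qIso_MCat_of_dense_codense hsep htot hF hG hFG⟩
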